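/- Let p be a prime, n a positive natural number, and m = p^n. Let V = Fin m → ZMod p, let A ∈ GL_m(ZMod p) be the Jordan block with eigenvalue 1 (entries 1 on the diagonal and first superdiagonal, 0 elsewhere), and let G be the semidirect product of the additive group V by the cyclic subgroup generated by A inside GL_m(ZMod p), where A acts on V by matrix-vector multiplication. Then the exponent of the group G is exactly p^(n+1). -/

import Mathlib

/-- The nilpotent upper-triangular Jordan block: entry `(i,j)` is `1` if `j = i + 1`
and `0` otherwise. -/
def jordanNilp (p m : ℕ) : Matrix (Fin m) (Fin m) (ZMod p) :=
  Matrix.of fun i j => if (j : ℕ) = (i : ℕ) + 1 then 1 else 0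

/-- The additive automorphism of `V = Fin m → ZMod p` given by right matrix-vector
multiplication (`vecMul`) by an invertible matrix `g`, i.e. `v ↦ v · g`. -/
def vecMulAut {p m : ℕ} (g : GL (Fin m) (ZMod p)) : AddAut (Fin m → ZMod p) where
  toFun v := Matrix.vecMul v (g : Matrix (Fin m) (Fin m) (ZMod p))
  invFun v := Matrix.vecMul v ((↑(g⁻¹) : Matrix (Fin m) (Fin m) (ZMod p)))
  left_inv v := by simp [Matrix.vecMul_vecMul]
  right_inv v := by simp [Matrix.vecMul_vecMul]
  map_add' u v := Matrix.add_vecMul (g : Matrix (Fin m) (Fin m) (ZMod p)) u v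

set_option maxHeartbeats 1000000 in
/-- The action of the cyclic subgroup `⟨A⟩ = Subgroup.zpowers A` on the (multiplicative
version of the) additive group `V = Fin m → ZMod p`, a matrix acting by right
matrix-vector multiplication `v ↦ v · A`. -/
def holPhi {p m : ℕ} (A : GL (Fin m) (ZMod p)) :
    ↥(Subgroup.zpowers A) →* MulAut (Multiplicative (Fin m → ZMod p)) where
  toFun g := AddEquiv.toMultiplicative (vecMulAut (g : GL (Fin m) (ZMod p)))
  map_one' := by
    ext v
    simp [vecMulAut, AddEquiv.toMultiplicative]
  map_mul' g h := by
    rw [show g * h = h * g by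
      obtain ⟨k, hk⟩ := Subgroup.mem_zpowers_iff.mp g.2
      obtain ⟨l, hl⟩ := Subgroup.mem_zpowers_iff.mp h.2
      apply Subtype.ext
      rw [Subgroup.coe_mul, Subgroup.coe_mul, ← hk, ← hl, ← zpow_add, ← zpow_add, add_comm]]
    ext v
    simp [vecMulAut, AddEquiv.toMultiplicative, Matrix.vecMul_vecMul]

/-!
Write `q = p ^ n` and `A = 1 + J`. In characteristic `p`, `A ^ q = 1 + J ^ q = 1` because `J` is
nilpotent of order `q`; so `g ^ q` lies in `V` for every `g ∈ G`, and `g ^ (p * q) = 1` since `V`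
has exponent `p`. For the converse take `g = (e₀, A)`: the `V`-component of `g ^ q` is
`e₀ · (1 + A + ⋯ + A ^ (q - 1))`, and multiplying by `X` shows that `∑ i < q, (1 + X) ^ i = X ^ (q - 1)`
in `𝔽_p[X]`, so this component is `e₀ · J ^ (q - 1) = e_{q-1} ≠ 0`. Hence `g` has order `p * q`.
-/

open Finset

namespace SemidirectProduct

section

variable {N G : Type*} [Group N] [Group G] {φ : G →* MulAut N}

theorem right_pow (x : N ⋊[φ] G) (k : ℕ) : (x ^ k).right = x.right ^ k :=
  map_pow rightHom x k

theorem exponent_dvd_mul :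
    Monoid.exponent (N ⋊[φ] G) ∣ Monoid.exponent G * Monoid.exponent N := by
  refine Monoid.exponent_dvd_of_forall_pow_eq_one fun x => ?_
  have hx : x ^ Monoid.exponent G = inl (x ^ Monoid.exponent G).left := by
    ext
    · rw [left_inl]
    · rw [right_pow, Monoid.pow_exponent_eq_one, right_inl]
  rw [pow_mul, hx, ← map_pow, Monoid.pow_exponent_eq_one, map_one]

end

theorem left_pow {N G : Type*} [CommGroup N] [Group G] {φ : G →* MulAut N} (x : N ⋊[φ] G)
    (k : ℕ) : (x ^ k).left = ∏ i ∈ range k, φ (x.right ^ i) x.left := by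
  induction k with
  | zero => simp
  | succ k ih => rw [pow_succ, mul_left, ih, prod_range_succ, right_pow]

end SemidirectProduct

open Polynomial in
theorem geom_sum_one_add_eq_pow_char_pow_sub_one {R : Type*} [Ring R] (p : ℕ) [Fact p.Prime]
    [Algebra (ZMod p) R] (x : R) (n : ℕ) :
    ∑ i ∈ range (p ^ n), (1 + x) ^ i = x ^ (p ^ n - 1) := by
  have hX : ∑ i ∈ range (p ^ n), (1 + X : (ZMod p)[X]) ^ i = X ^ (p ^ n - 1) := by
    refine mul_right_cancel₀ (X_ne_zero (R := ZMod p)) ?_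
    calc (∑ i ∈ range (p ^ n), (1 + X : (ZMod p)[X]) ^ i) * X
        = (∑ i ∈ range (p ^ n), (1 + X : (ZMod p)[X]) ^ i) * ((1 + X) - 1) := by
          rw [add_sub_cancel_left]
      _ = X ^ (p ^ n - 1) * X := by
        rw [geom_sum_mul, add_pow_char_pow, one_pow, add_sub_cancel_left, ← pow_succ,
          Nat.sub_add_cancel (Nat.one_le_pow _ _ (Fact.out : p.Prime).pos)]
  simpa only [map_sum, map_pow, map_add, map_one, aeval_X] using congrArg (aeval x) hX

section JordanBlock

variable (p : ℕ) {m : ℕ}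

theorem jordanNilp_apply (i j : Fin m) :
    jordanNilp p m i j = if (j : ℕ) = i + 1 then 1 else 0 :=
  rfl

theorem jordanNilp_pow_apply (k : ℕ) (i j : Fin m) :
    (jordanNilp p m ^ k) i j = if (j : ℕ) = i + k then 1 else 0 := by
  induction k generalizing j with
  | zero => simp [Matrix.one_apply, Fin.ext_iff, eq_comm]
  | succ k ih =>
    rw [pow_succ, Matrix.mul_apply]
    simp only [ih, jordanNilp_apply, ite_mul, one_mul, zero_mul]
    by_cases h : (i : ℕ) + k < m
    · rw [sum_eq_single_of_mem ⟨i + k, h⟩ (mem_univ _)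
        fun b _ hb => if_neg fun hb' => hb (Fin.ext hb')]
      simp [Nat.add_assoc]
    · rw [sum_eq_zero fun b _ => if_neg (by omega), if_neg (by omega)]

theorem jordanNilp_pow_self : jordanNilp p m ^ m = 0 := by
  ext i j
  rw [jordanNilp_pow_apply, if_neg (by omega), Matrix.zero_apply]

theorem single_vecMul_jordanNilp_pow (i : Fin m) (k : ℕ) (j : Fin m) :
    Matrix.vecMul (Pi.single i 1) (jordanNilp p m ^ k) j = if (j : ℕ) = i + k then 1 else 0 := by
  rw [Matrix.single_vecMul, one_smul, Matrix.row_apply, jordanNilp_pow_apply]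

end JordanBlock

section Holomorph

variable {p m : ℕ}

theorem toAdd_left_pow_mk_self (A : GL (Fin m) (ZMod p)) (v : Multiplicative (Fin m → ZMod p))
    (k : ℕ) :
    ((⟨v, ⟨A, Subgroup.mem_zpowers A⟩⟩ : Multiplicative (Fin m → ZMod p) ⋊[holPhi A]
        Subgroup.zpowers A) ^ k).left.toAdd =
      Matrix.vecMul v.toAdd (∑ i ∈ range k, ((A ^ i : GL (Fin m) (ZMod p)) : Matrix _ _ _)) := by
  rw [SemidirectProduct.left_pow, toAdd_prod, Matrix.vecMul_sum]
  rfl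

theorem exponent_multiplicative_pi_zmod_dvd (ι : Type*) [Fintype ι] :
    Monoid.exponent (Multiplicative (ι → ZMod p)) ∣ p := by
  rw [Monoid.exponent_multiplicative, AddMonoid.exponent_pi]
  exact lcm_dvd fun _ _ => (ZMod.exponent p).dvd

end Holomorph

theorem exponent_holomorph_jordan_block_boundary_general (p m n : ℕ) [Fact p.Prime]
    (hm : m = p ^ n)
    (A : GL (Fin m) (ZMod p))
    (hA : (A : Matrix (Fin m) (Fin m) (ZMod p)) = 1 + jordanNilp p m) :
    Monoid.exponent (Multiplicative (Fin m → ZMod p) ⋊[holPhi A] ↥(Subgroup.zpowers A))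
      = p ^ (n + 1) := by
  subst hm
  have hq_pos : 0 < p ^ n := pow_pos (Fact.out : p.Prime).pos n
  have : NeZero (p ^ n) := ⟨hq_pos.ne'⟩
  have hA_pow : A ^ p ^ n = 1 := Units.ext <| by
    rw [Units.val_pow_eq_pow_val, hA, add_pow_char_pow_of_commute p n (Commute.one_left _),
      one_pow, jordanNilp_pow_self, add_zero, Units.val_one]
  have h_upper : Monoid.exponent (Multiplicative (Fin (p ^ n) → ZMod p) ⋊[holPhi A]
      ↥(Subgroup.zpowers A)) ∣ p ^ (n + 1) := by
    refine SemidirectProduct.exponent_dvd_mul.trans (pow_succ p n ▸ mul_dvd_mul ?_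
      (exponent_multiplicative_pi_zmod_dvd _))
    rw [IsCyclic.exponent_eq_card, Nat.card_zpowers]
    exact orderOf_dvd_of_pow_eq_one hA_pow
  let g : Multiplicative (Fin (p ^ n) → ZMod p) ⋊[holPhi A] ↥(Subgroup.zpowers A) :=
    ⟨.ofAdd (Pi.single 0 1), ⟨A, Subgroup.mem_zpowers A⟩⟩
  have hg : g ^ p ^ n ≠ 1 := fun h => by
    have := congrArg (fun x => x.left.toAdd ⟨p ^ n - 1, by omega⟩) h
    simp only [g, toAdd_left_pow_mk_self, Units.val_pow_eq_pow_val, hA,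
      geom_sum_one_add_eq_pow_char_pow_sub_one, toAdd_ofAdd, single_vecMul_jordanNilp_pow,
      SemidirectProduct.one_left, toAdd_one, Pi.zero_apply] at this
    simp at this
  have hg_order : orderOf g = p ^ (n + 1) :=
    orderOf_eq_prime_pow hg (Monoid.exponent_dvd_iff_forall_pow_eq_one.1 h_upper g)
  exact Nat.dvd_antisymm h_upper (hg_order ▸ Monoid.order_dvd_exponent g)

theorem exponent_holomorph_jordan_block_boundary (p m n : ℕ) [Fact p.Prime]
    (hn : 0 < n) (hm : m = p ^ n)
    (A : GL (Fin m) (ZMod p))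
    (hA : (A : Matrix (Fin m) (Fin m) (ZMod p)) = 1 + jordanNilp p m) :
    Monoid.exponent (Multiplicative (Fin m → ZMod p) ⋊[holPhi A] ↥(Subgroup.zpowers A))
      = p ^ (n + 1) :=
  exponent_holomorph_jordan_block_boundary_general p m n hm A hA
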